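/- Completeness of J4_CS: for every constant specification CS for J4 and every formula A, if A is not derivable in the Hilbert system J4_CS then there exists a Fitting model M for J4_CS and a world w in M such that M,w ⊮ A. -/

import Mathlib

/-!
In the canonical model the worlds are the maximal consistent sets of formulas, `t` is
evidence for `A` at `Γ` iff `t : A ∈ Γ`, and `Δ` is accessible from `Γ` iff `A ∈ Δ` whenever
`t : A ∈ Γ`. Axioms (A2), (A3) and (AN) make this evidence relation admissible, and (j4),
which puts `!t : t : A` into `Γ` along with `t : A`, gives both transitivity of accessibility
and monotonicity of evidence. The truth lemma `Γ ⊩ A ↔ A ∈ Γ` then refutes an underivable `A`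
at any maximal consistent extension of `{¬A}`, which exists by Lindenbaum's lemma.
-/

namespace JustificationLogic

/-- Justification terms: constants, variables, application, sum, and proof checker `!`. -/
inductive Term : Type
  | const : ℕ → Term
  | var : ℕ → Term
  | app : Term → Term → Term
  | sum : Term → Term → Term
  | bang : Term → Term
  deriving DecidableEq

/-- Formulas of justification logic: atoms, negation, implication, and `t : A`. -/
inductive Formula : Type
  | atom : ℕ → Formula
  | neg : Formula → Formula
  | impl : Formula → Formula → Formula
  | just : Term → Formula → Formula
  deriving DecidableEq

/-- Disjunction, defined classically: `A ∨ B := ¬A → B`. -/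
def Formula.or (A B : Formula) : Formula := (Formula.neg A).impl B

/-- Falsum, defined as the negation of a propositional tautology. -/
def Formula.falsum : Formula := Formula.neg ((Formula.atom 0).impl (Formula.atom 0))

/-- Number of symbols of a term. -/
def Term.size : Term → ℕ
  | .const _ => 1
  | .var _ => 1
  | .app s t => s.size + t.size + 1
  | .sum s t => s.size + t.size + 1
  | .bang t => t.size + 1

/-- Number of symbols of a formula. -/
def Formula.size : Formula → ℕ
  | .atom _ => 1
  | .neg A => A.size + 1
  | .impl A B => A.size + B.size + 1
  | .just t A => t.size + A.size + 1

/-- An explicit numerical code for terms (an injective Gödel numbering). -/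
def Term.code : Term → ℕ
  | .const n => Nat.pair 0 n
  | .var n => Nat.pair 1 n
  | .app s t => Nat.pair 2 (Nat.pair s.code t.code)
  | .sum s t => Nat.pair 3 (Nat.pair s.code t.code)
  | .bang t => Nat.pair 4 t.code

/-- An explicit numerical code for formulas (an injective Gödel numbering). -/
def Formula.code : Formula → ℕ
  | .atom n => Nat.pair 0 n
  | .neg A => Nat.pair 1 A.code
  | .impl A B => Nat.pair 2 (Nat.pair A.code B.code)
  | .just t A => Nat.pair 3 (Nat.pair t.code A.code)

/-- Substitution of terms for term variables. -/
def Term.subst (σ : ℕ → Term) : Term → Term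
  | .const n => .const n
  | .var n => σ n
  | .app s t => .app (s.subst σ) (t.subst σ)
  | .sum s t => .sum (s.subst σ) (t.subst σ)
  | .bang t => .bang (t.subst σ)

/-- Simultaneous substitution of terms for term variables and formulas for atoms. -/
def Formula.subst (σ : ℕ → Term) (τ : ℕ → Formula) : Formula → Formula
  | .atom n => τ n
  | .neg A => .neg (A.subst σ τ)
  | .impl A B => .impl (A.subst σ τ) (B.subst σ τ)
  | .just t A => .just (t.subst σ) (A.subst σ τ)

/-- `towerT c n = !ⁿc`. -/
def towerT (c : Term) : ℕ → Term
  | 0 => c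
  | n + 1 => Term.bang (towerT c n)

/-- `towerF c A n = !ⁿ⁻¹c : ⋯ : !c : c : A` (and `A` for `n = 0`), so that
`(towerT c n) : (towerF c A n)` is the `n`-th formula produced by the rule (AN!). -/
def towerF (c : Term) (A : Formula) : ℕ → Formula
  | 0 => A
  | n + 1 => Formula.just (towerT c n) (towerF c A n)

/-- The axioms of the justification logics considered, with switches `hd`, `ht`, `h4`
for the axioms (jd), (jt), (j4).  The propositional part (A1) is given by three
standard Hilbert-style schemes axiomatizing classical propositional logic. -/
inductive Ax (hd ht h4 : Bool) : Formula → Prop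
  | k (A B : Formula) : Ax hd ht h4 (A.impl (B.impl A))
  | s (A B C : Formula) :
      Ax hd ht h4 ((A.impl (B.impl C)).impl ((A.impl B).impl (A.impl C)))
  | dn (A B : Formula) :
      Ax hd ht h4 (((A.neg).impl (B.neg)).impl (B.impl A))
  | a2 (t s : Term) (A B : Formula) :
      Ax hd ht h4 ((Formula.just t (A.impl B)).impl
        ((Formula.just s A).impl (Formula.just (Term.app t s) B)))
  | a3 (t s : Term) (A : Formula) :
      Ax hd ht h4 (((Formula.just t A).or (Formula.just s A)).impl
        (Formula.just (Term.sum t s) A))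
  | jd (t : Term) : hd = true →
      Ax hd ht h4 ((Formula.just t Formula.falsum).impl Formula.falsum)
  | jt (t : Term) (A : Formula) : ht = true →
      Ax hd ht h4 ((Formula.just t A).impl A)
  | j4 (t : Term) (A : Formula) : h4 = true →
      Ax hd ht h4 ((Formula.just t A).impl
        (Formula.just (Term.bang t) (Formula.just t A)))

/-- Axioms of the respective logics. -/
def AxJ : Formula → Prop := Ax false false false
def AxJT : Formula → Prop := Ax false true false
def AxJD : Formula → Prop := Ax true false false
def AxJ4 : Formula → Prop := Ax false false true
def AxJD4 : Formula → Prop := Ax true false true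
def AxLP : Formula → Prop := Ax false true true

/-- `CS` is a constant specification for the logic with axioms `Axm`:
every member of `CS` is of the form `c : A` with `c` a constant and `A` an axiom. -/
def ConstSpec (Axm : Formula → Prop) (CS : Set Formula) : Prop :=
  ∀ F ∈ CS, ∃ (c : ℕ) (A : Formula), F = Formula.just (Term.const c) A ∧ Axm A

/-- `CS` is axiomatically appropriate for axioms `Axm`:
for every axiom `A` there is a constant `c` with `c : A ∈ CS`. -/
def AxApprop (Axm : Formula → Prop) (CS : Set Formula) : Prop :=
  ∀ A : Formula, Axm A → ∃ c : ℕ, Formula.just (Term.const c) A ∈ CS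

/-- `CS` is schematic: the set of axioms justified by a given constant consists of
axiom schemes, i.e. it is closed under simultaneous substitution of terms for term
variables and formulas for atomic propositions. -/
def Schematic (CS : Set Formula) : Prop :=
  ∀ (c : ℕ) (A : Formula), Formula.just (Term.const c) A ∈ CS →
    ∀ (σ : ℕ → Term) (τ : ℕ → Formula),
      Formula.just (Term.const c) (A.subst σ τ) ∈ CS

/-- `CS` is decidable: some computable function decides membership in `CS`
(via the explicit Gödel numbering of formulas). -/
def DecidableCS (CS : Set Formula) : Prop :=
  ∃ C : ℕ → Bool, Computable C ∧ ∀ F : Formula, F ∈ CS ↔ C F.code = true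

/-- Hilbert-style derivability with the iterated axiom necessitation rule (AN!):
from `c : A ∈ CS` infer `!ⁿc : !ⁿ⁻¹c : ⋯ : !c : c : A` for every `n ≥ 0`. -/
inductive DerivB (Axm : Formula → Prop) (CS : Set Formula) : Formula → Prop
  | ax {A : Formula} : Axm A → DerivB Axm CS A
  | mp {A B : Formula} : DerivB Axm CS (A.impl B) → DerivB Axm CS A → DerivB Axm CS B
  | an (c : ℕ) (A : Formula) (n : ℕ) :
      Formula.just (Term.const c) A ∈ CS →
      DerivB Axm CS (Formula.just (towerT (Term.const c) n) (towerF (Term.const c) A n))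

/-- Hilbert-style derivability with the simple axiom necessitation rule (AN):
from `c : A ∈ CS` infer `c : A`. -/
inductive DerivS (Axm : Formula → Prop) (CS : Set Formula) : Formula → Prop
  | ax {A : Formula} : Axm A → DerivS Axm CS A
  | mp {A B : Formula} : DerivS Axm CS (A.impl B) → DerivS Axm CS A → DerivS Axm CS B
  | an (c : ℕ) (A : Formula) :
      Formula.just (Term.const c) A ∈ CS →
      DerivS Axm CS (Formula.just (Term.const c) A)

/-- A structure for Fitting models: a nonempty set of worlds, an accessibility
relation, an evidence relation and a valuation. -/
structure Model : Type 1 where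
  World : Type
  nonempty : Nonempty World
  R : World → World → Prop
  E : Term → Formula → World → Prop
  val : ℕ → World → Prop

/-- The satisfaction relation `M, w ⊩ A`. -/
def Sat (M : Model) : Formula → M.World → Prop
  | .atom n, w => M.val n w
  | .neg A, w => ¬ Sat M A w
  | .impl A B, w => Sat M A w → Sat M B w
  | .just t A, w => M.E t A w ∧ ∀ v : M.World, M.R w v → Sat M A v

/-- The evidence relation of a model, as a set of triples. -/
def EvSet (M : Model) : Set (Term × Formula × M.World) :=
  {x | M.E x.1 x.2.1 x.2.2}

/-- The graph of the valuation: the set `{(w, p) | w ∈ ν(p)}`. -/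
def ValSet (M : Model) : Set (M.World × ℕ) :=
  {p | M.val p.2 p.1}

/-- Seriality of a relation: every world has a successor. -/
def Serial {W : Type} (R : W → W → Prop) : Prop := ∀ w : W, ∃ v : W, R w v

/-- Admissible evidence relation for the logics without the (j4) axiom:
closure under sum and application, and the constant specification condition
with iterated `!`. -/
def AdmissibleBang (CS : Set Formula) {W : Type}
    (E : Set (Term × Formula × W)) : Prop :=
  (∀ (s t : Term) (A : Formula) (w : W),
      ((s, A, w) ∈ E ∨ (t, A, w) ∈ E) → (Term.sum s t, A, w) ∈ E) ∧
  (∀ (s t : Term) (A B : Formula) (w : W),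
      (s, A.impl B, w) ∈ E → (t, A, w) ∈ E → (Term.app s t, B, w) ∈ E) ∧
  (∀ (c : ℕ) (A : Formula) (w : W) (n : ℕ),
      Formula.just (Term.const c) A ∈ CS →
      (towerT (Term.const c) n, towerF (Term.const c) A n, w) ∈ E)

/-- Admissible evidence relation for the logics with the (j4) axiom:
closure under sum and application, the simple constant specification condition,
closure under `!`, and monotonicity along the accessibility relation. -/
def AdmissibleJ4 (CS : Set Formula) {W : Type} (R : W → W → Prop)
    (E : Set (Term × Formula × W)) : Prop :=
  (∀ (s t : Term) (A : Formula) (w : W),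
      ((s, A, w) ∈ E ∨ (t, A, w) ∈ E) → (Term.sum s t, A, w) ∈ E) ∧
  (∀ (s t : Term) (A B : Formula) (w : W),
      (s, A.impl B, w) ∈ E → (t, A, w) ∈ E → (Term.app s t, B, w) ∈ E) ∧
  (∀ (c : ℕ) (A : Formula) (w : W),
      Formula.just (Term.const c) A ∈ CS → (Term.const c, A, w) ∈ E) ∧
  (∀ (t : Term) (A : Formula) (w : W),
      (t, A, w) ∈ E → (Term.bang t, Formula.just t A, w) ∈ E) ∧
  (∀ (t : Term) (A : Formula) (w v : W),
      (t, A, w) ∈ E → R w v → (t, A, v) ∈ E)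

/-- `M` is a Fitting model for `J_CS`. -/
def IsModelJ (CS : Set Formula) (M : Model) : Prop :=
  AdmissibleBang CS (EvSet M)

/-- `M` is a Fitting model for `JT_CS`: additionally `R` is reflexive. -/
def IsModelJT (CS : Set Formula) (M : Model) : Prop :=
  Reflexive M.R ∧ AdmissibleBang CS (EvSet M)

/-- `M` is a Fitting model for `JD_CS`: additionally `R` is serial. -/
def IsModelJD (CS : Set Formula) (M : Model) : Prop :=
  Serial M.R ∧ AdmissibleBang CS (EvSet M)

/-- `M` is a Fitting model for `J4_CS`: `R` is transitive. -/
def IsModelJ4 (CS : Set Formula) (M : Model) : Prop :=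
  Transitive M.R ∧ AdmissibleJ4 CS M.R (EvSet M)

/-- `M` is a Fitting model for `JD4_CS`: `R` is serial and transitive. -/
def IsModelJD4 (CS : Set Formula) (M : Model) : Prop :=
  Serial M.R ∧ Transitive M.R ∧ AdmissibleJ4 CS M.R (EvSet M)

/-- `M` is a Fitting model for `LP_CS`: `R` is reflexive and transitive. -/
def IsModelLP (CS : Set Formula) (M : Model) : Prop :=
  Reflexive M.R ∧ Transitive M.R ∧ AdmissibleJ4 CS M.R (EvSet M)

/-- `B` is a base for the evidence relation of `M`, and that evidence relation is
minimal (least) among the admissible ones (non-(j4) version) containing `B`. -/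
def MinBaseBang (CS : Set Formula) (M : Model)
    (B : Set (Term × Formula × M.World)) : Prop :=
  B ⊆ EvSet M ∧
  ∀ E' : Set (Term × Formula × M.World),
    AdmissibleBang CS E' → B ⊆ E' → EvSet M ⊆ E'

/-- `B` is a base for the evidence relation of `M`, and that evidence relation is
minimal (least) among the admissible ones ((j4) version) containing `B`. -/
def MinBaseJ4 (CS : Set Formula) (M : Model)
    (B : Set (Term × Formula × M.World)) : Prop :=
  B ⊆ EvSet M ∧
  ∀ E' : Set (Term × Formula × M.World),
    AdmissibleJ4 CS M.R E' → B ⊆ E' → EvSet M ⊆ E'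

/-- `M` is finitary (non-(j4) version): finitely many worlds, the evidence relation
is the minimal admissible one over some finite base, and the valuation has finite graph. -/
def FinitaryBang (CS : Set Formula) (M : Model) : Prop :=
  Finite M.World ∧
  (∃ B : Set (Term × Formula × M.World), B.Finite ∧ MinBaseBang CS M B) ∧
  (ValSet M).Finite

/-- `M` is finitary ((j4) version): finitely many worlds, the evidence relation
is the minimal admissible one over some finite base, and the valuation has finite graph. -/
def FinitaryJ4 (CS : Set Formula) (M : Model) : Prop :=
  Finite M.World ∧
  (∃ B : Set (Term × Formula × M.World), B.Finite ∧ MinBaseJ4 CS M B) ∧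
  (ValSet M).Finite

inductive Deriv (Axm : Formula → Prop) (CS Γ : Set Formula) : Formula → Prop
  | ax {A : Formula} : Axm A → Deriv Axm CS Γ A
  | hyp {A : Formula} : A ∈ Γ → Deriv Axm CS Γ A
  | an {c : ℕ} {A : Formula} : Formula.just (Term.const c) A ∈ CS →
      Deriv Axm CS Γ (Formula.just (Term.const c) A)
  | mp {A B : Formula} : Deriv Axm CS Γ (A.impl B) → Deriv Axm CS Γ A → Deriv Axm CS Γ B

namespace Deriv

variable {Axm : Formula → Prop} {CS Γ Δ : Set Formula} {A B : Formula}

theorem mono (h : Deriv Axm CS Γ A) (hΓ : Γ ⊆ Δ) : Deriv Axm CS Δ A := by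
  induction h with
  | ax h => exact .ax h
  | hyp h => exact .hyp (hΓ h)
  | an h => exact .an h
  | mp _ _ ihAB ihA => exact .mp ihAB ihA

theorem derivS_of_empty (h : Deriv Axm CS ∅ A) : DerivS Axm CS A := by
  induction h with
  | ax h => exact .ax h
  | hyp h => exact absurd h (Set.notMem_empty _)
  | an h => exact .an _ _ h
  | mp _ _ ihAB ihA => exact .mp ihAB ihA

theorem exists_mem_of_sUnion {c : Set (Set Formula)} (hc : IsChain (· ⊆ ·) c)
    (hne : c.Nonempty) (h : Deriv Axm CS (⋃₀ c) A) : ∃ Γ ∈ c, Deriv Axm CS Γ A := by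
  induction h with
  | ax h => exact ⟨hne.some, hne.some_mem, .ax h⟩
  | hyp h =>
    obtain ⟨Γ, hΓ, hA⟩ := h
    exact ⟨Γ, hΓ, .hyp hA⟩
  | an h => exact ⟨hne.some, hne.some_mem, .an h⟩
  | mp _ _ ihAB ihA =>
    obtain ⟨Γ₁, hΓ₁, hAB⟩ := ihAB
    obtain ⟨Γ₂, hΓ₂, hA⟩ := ihA
    rcases hc.total hΓ₁ hΓ₂ with h₁₂ | h₂₁
    · exact ⟨Γ₂, hΓ₂, .mp (hAB.mono h₁₂) hA⟩
    · exact ⟨Γ₁, hΓ₁, .mp hAB (hA.mono h₂₁)⟩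

variable {hd ht h4 : Bool}

theorem imp_self (A : Formula) : Deriv (Ax hd ht h4) CS Γ (A.impl A) :=
  .mp (.mp (.ax (Ax.s A (A.impl A) A)) (.ax (Ax.k A (A.impl A)))) (.ax (Ax.k A A))

theorem deduction (h : Deriv (Ax hd ht h4) CS (insert A Γ) B) :
    Deriv (Ax hd ht h4) CS Γ (A.impl B) := by
  induction h with
  | ax h => exact .mp (.ax (Ax.k _ _)) (.ax h)
  | hyp h =>
    rcases h with rfl | h
    · exact imp_self _
    · exact .mp (.ax (Ax.k _ _)) (.hyp h)
  | an h => exact .mp (.ax (Ax.k _ _)) (.an h)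
  | mp _ _ ihAB ihA => exact .mp (.mp (.ax (Ax.s _ _ _)) ihAB) ihA

theorem cut (hA : Deriv (Ax hd ht h4) CS Γ A) (h : Deriv (Ax hd ht h4) CS (insert A Γ) B) :
    Deriv (Ax hd ht h4) CS Γ B :=
  .mp (deduction h) hA

theorem efq (A B : Formula) : Deriv (Ax hd ht h4) CS Γ (A.neg.impl (A.impl B)) :=
  deduction (.mp (.ax (Ax.dn B A)) (.mp (.ax (Ax.k A.neg B.neg)) (.hyp (Set.mem_insert _ _))))

-- `¬A → ⊥` is literally `¬A → ¬(p → p)`, so axiom `dn` turns it into `(p → p) → A`.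
theorem by_contradiction (h : Deriv (Ax hd ht h4) CS (insert A.neg Γ) Formula.falsum) :
    Deriv (Ax hd ht h4) CS Γ A :=
  .mp (.mp (.ax (Ax.dn A _)) (deduction h)) (imp_self _)

theorem or_inl (h : Deriv (Ax hd ht h4) CS Γ A) : Deriv (Ax hd ht h4) CS Γ (A.or B) :=
  deduction (.mp (.mp (efq A B) (.hyp (Set.mem_insert _ _))) (h.mono (Set.subset_insert _ _)))

theorem or_inr (h : Deriv (Ax hd ht h4) CS Γ B) : Deriv (Ax hd ht h4) CS Γ (A.or B) :=
  .mp (.ax (Ax.k B A.neg)) h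

end Deriv

def Consistent (Axm : Formula → Prop) (CS Γ : Set Formula) : Prop :=
  ¬ Deriv Axm CS Γ Formula.falsum

def MaxConsistent (Axm : Formula → Prop) (CS Γ : Set Formula) : Prop :=
  Consistent Axm CS Γ ∧ ∀ A : Formula, A ∈ Γ ∨ A.neg ∈ Γ

section Lindenbaum

variable {hd ht h4 : Bool} {CS Γ : Set Formula} {A : Formula}

theorem consistent_insert_neg (h : ¬ Deriv (Ax hd ht h4) CS Γ A) :
    Consistent (Ax hd ht h4) CS (insert A.neg Γ) :=
  fun h' => h (Deriv.by_contradiction h')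

theorem Consistent.insert_or_insert_neg (h : Consistent (Ax hd ht h4) CS Γ) (A : Formula) :
    Consistent (Ax hd ht h4) CS (insert A Γ) ∨ Consistent (Ax hd ht h4) CS (insert A.neg Γ) := by
  refine or_iff_not_imp_right.mpr fun hnA hA => h ?_
  exact Deriv.cut (Deriv.by_contradiction (not_not.mp hnA)) hA

theorem exists_maxConsistent_superset (h : Consistent (Ax hd ht h4) CS Γ) :
    ∃ Δ, Γ ⊆ Δ ∧ MaxConsistent (Ax hd ht h4) CS Δ := by
  have hchain : ∀ c ⊆ {Δ | Consistent (Ax hd ht h4) CS Δ}, IsChain (· ⊆ ·) c → c.Nonempty →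
      ∃ ub ∈ {Δ | Consistent (Ax hd ht h4) CS Δ}, ∀ Δ ∈ c, Δ ⊆ ub := by
    intro c hcons hc hne
    refine ⟨⋃₀ c, fun hbot => ?_, fun Δ hΔ => Set.subset_sUnion_of_mem hΔ⟩
    obtain ⟨Δ, hΔ, hbotΔ⟩ := hbot.exists_mem_of_sUnion hc hne
    exact hcons hΔ hbotΔ
  obtain ⟨Δ, hΓΔ, hmax⟩ := zorn_subset_nonempty _ hchain Γ h
  refine ⟨Δ, hΓΔ, hmax.prop, fun A => ?_⟩
  rcases hmax.prop.insert_or_insert_neg A with hA | hnA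
  · exact .inl (hmax.mem_of_prop_insert hA)
  · exact .inr (hmax.mem_of_prop_insert hnA)

end Lindenbaum

namespace MaxConsistent

variable {hd ht h4 : Bool} {CS Γ : Set Formula} {A B : Formula}

theorem mem_of_deriv (hΓ : MaxConsistent (Ax hd ht h4) CS Γ)
    (h : Deriv (Ax hd ht h4) CS Γ A) : A ∈ Γ :=
  (hΓ.2 A).resolve_right fun hnA => hΓ.1 (.mp (.mp (Deriv.efq A _) (.hyp hnA)) h)

theorem neg_mem_iff (hΓ : MaxConsistent (Ax hd ht h4) CS Γ) : A.neg ∈ Γ ↔ A ∉ Γ :=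
  ⟨fun hnA hA => hΓ.1 (.mp (.mp (Deriv.efq A _) (.hyp hnA)) (.hyp hA)), (hΓ.2 A).resolve_left⟩

theorem impl_mem_iff (hΓ : MaxConsistent (Ax hd ht h4) CS Γ) :
    A.impl B ∈ Γ ↔ (A ∈ Γ → B ∈ Γ) := by
  refine ⟨fun hAB hA => hΓ.mem_of_deriv (.mp (.hyp hAB) (.hyp hA)), fun hAB => ?_⟩
  by_cases hA : A ∈ Γ
  · exact hΓ.mem_of_deriv (.mp (.ax (Ax.k B A)) (.hyp (hAB hA)))
  · exact hΓ.mem_of_deriv (.mp (Deriv.efq A B) (.hyp (hΓ.neg_mem_iff.mpr hA)))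

theorem bang_mem (hΓ : MaxConsistent (Ax hd ht true) CS Γ) {t : Term}
    (h : Formula.just t A ∈ Γ) : Formula.just (Term.bang t) (Formula.just t A) ∈ Γ :=
  hΓ.mem_of_deriv (.mp (.ax (Ax.j4 t A rfl)) (.hyp h))

end MaxConsistent

def CanonicalWorld (Axm : Formula → Prop) (CS : Set Formula) : Type :=
  {Γ : Set Formula // MaxConsistent Axm CS Γ}

def canonicalModel (Axm : Formula → Prop) (CS : Set Formula)
    (hne : Nonempty (CanonicalWorld Axm CS)) : Model where
  World := CanonicalWorld Axm CS
  nonempty := hne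
  R Γ Δ := ∀ (t : Term) (A : Formula), Formula.just t A ∈ Γ.1 → A ∈ Δ.1
  E t A Γ := Formula.just t A ∈ Γ.1
  val n Γ := Formula.atom n ∈ Γ.1

section CanonicalModel

variable {hd ht h4 : Bool} {CS : Set Formula}

theorem sat_canonicalModel_iff (hne : Nonempty (CanonicalWorld (Ax hd ht h4) CS))
    (A : Formula) (Γ : CanonicalWorld (Ax hd ht h4) CS) :
    Sat (canonicalModel (Ax hd ht h4) CS hne) A Γ ↔ A ∈ Γ.1 := by
  induction A generalizing Γ with
  | atom n => exact Iff.rfl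
  | neg A ih => exact (not_congr (ih Γ)).trans Γ.2.neg_mem_iff.symm
  | impl A B ihA ihB => exact (imp_congr (ihA Γ) (ihB Γ)).trans Γ.2.impl_mem_iff.symm
  | just t A ih => exact ⟨And.left, fun h => ⟨h, fun Δ hΓΔ => (ih Δ).mpr (hΓΔ t A h)⟩⟩

theorem isModelJ4_canonicalModel (hne : Nonempty (CanonicalWorld (Ax hd ht true) CS)) :
    IsModelJ4 CS (canonicalModel (Ax hd ht true) CS hne) := by
  refine ⟨?trans, ?sum, ?app, ?const, ?bang, ?mono⟩
  case trans =>
    intro Γ Δ Θ hΓΔ hΔΘ t A h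
    exact hΔΘ _ _ (hΓΔ _ _ (Γ.2.bang_mem h))
  case sum =>
    rintro s t A Γ (h | h)
    · exact Γ.2.mem_of_deriv (.mp (.ax (Ax.a3 s t A)) (Deriv.or_inl (.hyp h)))
    · exact Γ.2.mem_of_deriv (.mp (.ax (Ax.a3 s t A)) (Deriv.or_inr (.hyp h)))
  case app =>
    intro s t A B Γ hs ht
    exact Γ.2.mem_of_deriv (.mp (.mp (.ax (Ax.a2 s t A B)) (.hyp hs)) (.hyp ht))
  case const => exact fun c A Γ h => Γ.2.mem_of_deriv (.an h)
  case bang => exact fun t A Γ h => Γ.2.bang_mem h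
  case mono => exact fun t A Γ Δ h hΓΔ => hΓΔ _ _ (Γ.2.bang_mem h)

end CanonicalModel

theorem completeness_J4_general (CS : Set Formula) (A : Formula)
    (hA : ¬ DerivS AxJ4 CS A) :
    ∃ M : Model, IsModelJ4 CS M ∧ ∃ w : M.World, ¬ Sat M A w := by
  have hcons : Consistent (Ax false false true) CS (insert A.neg ∅) :=
    consistent_insert_neg fun h => hA h.derivS_of_empty
  obtain ⟨Γ, hAΓ, hΓ⟩ := exists_maxConsistent_superset hcons
  let w : CanonicalWorld (Ax false false true) CS := ⟨Γ, hΓ⟩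
  refine ⟨canonicalModel (Ax false false true) CS ⟨w⟩, isModelJ4_canonicalModel _, w, ?_⟩
  rw [sat_canonicalModel_iff]
  exact hΓ.neg_mem_iff.mp (hAΓ (Set.mem_insert _ _))

/-- Completeness of `J4_CS`: if a formula is not derivable in the Hilbert system
`J4_CS` (with constant specification `CS`), then it fails at some world
of some Fitting model for `J4_CS`. -/
theorem completeness_J4 (CS : Set Formula) (hCS : ConstSpec AxJ4 CS) (A : Formula)
    (hA : ¬ DerivS AxJ4 CS A) :
    ∃ M : Model, IsModelJ4 CS M ∧ ∃ w : M.World, ¬ Sat M A w :=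
  completeness_J4_general CS A hA

end JustificationLogic
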